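/- arXiv:2206.13489 — 6 statements merged into one kernel-verified Lean document; each statement's English description precedes it below -/
import Mathlib

section
/- For any β ≥ 2, the function (z₁, z₂) ↦ min((2/β)^{−2/β} z₁², 1) + min((2/β)^{−2/β} z₂², 1) − (z₁² + z₂²)^{β/2} over z₁, z₂ ≥ 0 is maximized at every point (z₁, z₂) with z₁² + z₂² = (2/β)^{2/β}, where its value is 1 − 2/β. -/
/-!
Put `p = β / 2`, so that `2 / β = p⁻¹`, `(2 / β) ^ (-(2 / β)) = p ^ p⁻¹` and the maximizing
radius is `c⋆ = (p ^ p⁻¹)⁻¹`. Bounding each `min` by its first argument reduces the claim to the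
one-variable inequality `p ^ p⁻¹ * c - c ^ p ≤ 1 - p⁻¹` for `c = z₁² + z₂²`; this is Bernoulli's
inequality `1 + p (t - 1) ≤ t ^ p` at `t = p ^ p⁻¹ * c`, for which `t ^ p = p * c ^ p`.
On the circle `c = c⋆` both first arguments are at most `p ^ p⁻¹ * c⋆ = 1`, so nothing is lost.
-/

namespace Real

variable {p c : ℝ}

theorem inv_rpow_inv_rpow_self (hp : 0 < p) : (p ^ p⁻¹)⁻¹ ^ p = p⁻¹ := by
  rw [inv_rpow (by positivity), ← rpow_mul hp.le, inv_mul_cancel₀ hp.ne', rpow_one]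

theorem rpow_inv_mul_sub_rpow_le (hp : 1 ≤ p) (hc : 0 ≤ c) :
    p ^ p⁻¹ * c - c ^ p ≤ 1 - p⁻¹ := by
  have hp₀ : 0 < p := by linarith
  set t := p ^ p⁻¹ * c
  have ht : 0 ≤ t := by positivity
  have ht_pow : t ^ p = p * c ^ p := by
    rw [mul_rpow (by positivity) hc, ← rpow_mul hp₀.le, inv_mul_cancel₀ hp₀.ne', rpow_one]
  have bernoulli : 1 + p * (t - 1) ≤ t ^ p := by
    simpa using one_add_mul_self_le_rpow_one_add (s := t - 1) (by linarith) hp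
  rw [ht_pow] at bernoulli
  have key : p * (t - c ^ p) ≤ p * (1 - p⁻¹) := by
    rw [mul_sub p 1, mul_inv_cancel₀ hp₀.ne']
    linarith
  exact le_of_mul_le_mul_left key hp₀

end Real

open Real

/-- For `β ≥ 2`, the function
`(z₁, z₂) ↦ min((2/β)^{−2/β} z₁², 1) + min((2/β)^{−2/β} z₂², 1) − (z₁² + z₂²)^{β/2}`
over nonnegative `z₁, z₂` is maximized, with value `1 − 2/β`, at every point with
`z₁² + z₂² = (2/β)^{2/β}`. -/
theorem stmt3 (β : ℝ) (hβ : 2 ≤ β) :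
    (∀ z₁ z₂ : ℝ, 0 ≤ z₁ → 0 ≤ z₂ → z₁ ^ 2 + z₂ ^ 2 = (2 / β) ^ (2 / β) →
        min ((2 / β) ^ (-(2 / β)) * z₁ ^ 2) 1 + min ((2 / β) ^ (-(2 / β)) * z₂ ^ 2) 1
          - (z₁ ^ 2 + z₂ ^ 2) ^ (β / 2) = 1 - 2 / β) ∧
    (∀ z₁ z₂ : ℝ, 0 ≤ z₁ → 0 ≤ z₂ →
        min ((2 / β) ^ (-(2 / β)) * z₁ ^ 2) 1 + min ((2 / β) ^ (-(2 / β)) * z₂ ^ 2) 1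
          - (z₁ ^ 2 + z₂ ^ 2) ^ (β / 2) ≤ 1 - 2 / β) := by
  have hp : 1 ≤ β / 2 := by linarith
  have hp₀ : 0 < β / 2 := by linarith
  set p := β / 2
  rw [show 2 / β = p⁻¹ by rw [inv_div],
    rpow_neg (inv_nonneg.2 hp₀.le), inv_rpow hp₀.le, inv_inv]
  constructor
  · intro z₁ z₂ _ _ hsum
    have hsum' : p ^ p⁻¹ * z₁ ^ 2 + p ^ p⁻¹ * z₂ ^ 2 = 1 := by
      rw [← mul_add, hsum, mul_inv_cancel₀ (by positivity)]
    have h₁ : 0 ≤ p ^ p⁻¹ * z₁ ^ 2 := by positivity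
    have h₂ : 0 ≤ p ^ p⁻¹ * z₂ ^ 2 := by positivity
    rw [min_eq_left (by linarith), min_eq_left (by linarith), hsum', hsum,
      inv_rpow_inv_rpow_self hp₀]
  · intro z₁ z₂ _ _
    have hc := rpow_inv_mul_sub_rpow_le hp (by positivity : 0 ≤ z₁ ^ 2 + z₂ ^ 2)
    rw [mul_add] at hc
    linarith [min_le_left (p ^ p⁻¹ * z₁ ^ 2) 1, min_le_left (p ^ p⁻¹ * z₂ ^ 2) 1]
end

section
/- Let θ* ∈ (0, π) and β ≥ 1. For z = (r cos θ, r cos(θ* − θ)) with r > 0 and θ ∈ (0, θ*), the mixed second partial derivative ∂²/∂z₁∂z₂ of c(z) = sin^{−β}(θ*) (z₁² + z₂² − 2 z₁ z₂ cos θ*)^{β/2} has the same sign as (β−2)/β · cos(θ* − 2θ) − cos(θ*). -/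
open Real

/-!
Differentiating `K Q^{β/2}` once in each variable, with `Q = z₁² + z₂² − 2 z₁ z₂ cos θ*`, gives
`β K Q^{β/2-2} ((β-2)(z₂ - z₁ cos θ*)(z₁ - z₂ cos θ*) - cos θ* · Q)`. At the point in question
`Q = (r sin θ*)²`, `z₂ - z₁ cos θ* = r sin θ* sin θ` and `z₁ - z₂ cos θ* = r sin θ* sin (θ* - θ)`,
so the bracket is `(r sin θ*)² ((β-2) sin θ sin (θ* - θ) - cos θ*)`; since
`cos (θ* - 2θ) = cos θ* + 2 sin θ sin (θ* - θ)`, the last factor is `β/2` times the expression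
in the statement.
-/

lemma Real.sign_mul_of_pos {p : ℝ} (hp : 0 < p) (x : ℝ) : Real.sign (p * x) = Real.sign x := by
  rcases lt_trichotomy x 0 with h | rfl | h
  · rw [Real.sign_of_neg h, Real.sign_of_neg (mul_neg_of_pos_of_neg hp h)]
  · simp
  · rw [Real.sign_of_pos h, Real.sign_of_pos (mul_pos hp h)]

/-- For `c = cos θ*`, `sin² θ*` times the squared length of the vector whose projections on two
unit vectors at angle `θ*` are `x` and `y`. -/
def quadForm (c x y : ℝ) : ℝ := x ^ 2 + y ^ 2 - 2 * x * y * c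

lemma quadForm_comm (c x y : ℝ) : quadForm c x y = quadForm c y x := by
  unfold quadForm; ring

lemma hasDerivAt_quadForm_left (c x y : ℝ) :
    HasDerivAt (fun x => quadForm c x y) (2 * (x - y * c)) x := by
  have h := ((hasDerivAt_pow 2 x).add_const (y ^ 2)).sub (hasDerivAt_mul_const (2 * y * c))
  refine (h.congr_deriv (by norm_num; ring)).congr_of_eventuallyEq (.of_forall fun x => ?_)
  simp only [quadForm, Pi.sub_apply]
  ring

lemma hasDerivAt_quadForm_right (c x y : ℝ) :
    HasDerivAt (fun y => quadForm c x y) (2 * (y - x * c)) y := by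
  simpa only [quadForm_comm c x] using hasDerivAt_quadForm_left c y x

lemma deriv_const_mul_quadForm_rpow_left (K β c x y : ℝ) (h : quadForm c x y ≠ 0) :
    deriv (fun x => K * quadForm c x y ^ (β / 2)) x
      = β * K * (quadForm c x y ^ (β / 2 - 1) * (x - y * c)) := by
  rw [(((hasDerivAt_quadForm_left c x y).rpow_const (Or.inl h)).const_mul K).deriv]
  ring

lemma deriv_deriv_const_mul_quadForm_rpow (K β c x y : ℝ) (h : quadForm c x y ≠ 0) :
    deriv (fun y => deriv (fun x => K * quadForm c x y ^ (β / 2)) x) y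
      = β * K * quadForm c x y ^ (β / 2 - 2) *
          ((β - 2) * (y - x * c) * (x - y * c) - c * quadForm c x y) := by
  have h_near : ∀ᶠ y' in nhds y, quadForm c x y' ≠ 0 :=
    (show Continuous fun y => quadForm c x y by unfold quadForm; fun_prop).continuousAt.eventually_ne h
  have h_inner : (fun y => deriv (fun x => K * quadForm c x y ^ (β / 2)) x)
      =ᶠ[nhds y] fun y => β * K * (quadForm c x y ^ (β / 2 - 1) * (x - y * c)) := by
    filter_upwards [h_near] with y' hy'
    exact deriv_const_mul_quadForm_rpow_left K β c x y' hy'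
  have h_lin : HasDerivAt (fun y => x - y * c) (-c) y := by
    simpa using ((hasDerivAt_id y).mul_const c).const_sub x
  have h_outer : HasDerivAt (fun y => β * K * (quadForm c x y ^ (β / 2 - 1) * (x - y * c))) _ y :=
    (((hasDerivAt_quadForm_right c x y).rpow_const (Or.inl h)).mul h_lin).const_mul (β * K)
  rw [h_inner.deriv_eq, h_outer.deriv, show β / 2 - 1 = β / 2 - 2 + 1 by ring, rpow_add_one h,
    show β / 2 - 2 + 1 - 1 = β / 2 - 2 by ring]
  ring

section Polar

variable (θs r θ : ℝ)

lemma quadForm_polar :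
    quadForm (cos θs) (r * cos θ) (r * cos (θs - θ)) = (r * sin θs) ^ 2 := by
  simp only [quadForm, cos_sub]
  linear_combination (r * sin θs) ^ 2 * sin_sq_add_cos_sq θ - (r * cos θ) ^ 2 * sin_sq_add_cos_sq θs

lemma polar_sub_left :
    r * cos (θs - θ) - r * cos θ * cos θs = r * sin θs * sin θ := by
  rw [cos_sub]; ring

lemma polar_sub_right :
    r * cos θ - r * cos (θs - θ) * cos θs = r * sin θs * sin (θs - θ) := by
  rw [cos_sub, sin_sub]
  linear_combination -(r * cos θ) * sin_sq_add_cos_sq θs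

end Polar

lemma cos_sub_two_mul_eq (θs θ : ℝ) :
    cos (θs - 2 * θ) = cos θs + 2 * sin θ * sin (θs - θ) := by
  have h₁ : θs - 2 * θ = (θs - θ) - θ := by ring
  have h₂ : θs = (θs - θ) + θ := by ring
  conv_lhs => rw [h₁, cos_sub]
  conv_rhs => rw [h₂, cos_add, add_sub_cancel_right]
  ring

theorem stmt5_general (θs β r θ : ℝ) (hθs : θs ∈ Set.Ioo 0 π) (hβ : 1 ≤ β)
    (hr : 0 < r) :
    Real.sign
        (deriv (fun z₂ => deriv (fun z₁ =>
            Real.sin θs ^ (-β) *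
              (z₁ ^ 2 + z₂ ^ 2 - 2 * z₁ * z₂ * Real.cos θs) ^ (β / 2)) (r * Real.cos θ))
          (r * Real.cos (θs - θ)))
      = Real.sign ((β - 2) / β * Real.cos (θs - 2 * θ) - Real.cos θs) := by
  have hsin : 0 < sin θs := sin_pos_of_pos_of_lt_pi hθs.1 hθs.2
  have hβ0 : 0 < β := by linarith
  have hQ : quadForm (cos θs) (r * cos θ) (r * cos (θs - θ)) = (r * sin θs) ^ 2 :=
    quadForm_polar θs r θ
  have hQ0 : 0 < (r * sin θs) ^ 2 := by positivity
  change Real.sign (deriv (fun z₂ => deriv (fun z₁ =>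
    sin θs ^ (-β) * quadForm (cos θs) z₁ z₂ ^ (β / 2)) _) _) = _
  rw [deriv_deriv_const_mul_quadForm_rpow _ _ _ _ _ (hQ ▸ hQ0.ne'), hQ,
    polar_sub_left, polar_sub_right, cos_sub_two_mul_eq]
  have hP : 0 < β ^ 2 / 2 * sin θs ^ (-β) * ((r * sin θs) ^ 2) ^ (β / 2 - 2) * (r * sin θs) ^ 2 := by
    positivity
  conv_rhs => rw [← Real.sign_mul_of_pos hP]
  congr 1
  field_simp
  ring

/-- For `θ* ∈ (0, π)`, `β ≥ 1`, at `z = (r cos θ, r cos(θ* − θ))` with `r > 0`,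
`θ ∈ (0, θ*)`, the mixed second partial `∂²/∂z₁∂z₂` of
`c(z) = sin^{−β}(θ*) (z₁² + z₂² − 2 z₁ z₂ cos θ*)^{β/2}` has the same sign as
`(β−2)/β · cos(θ* − 2θ) − cos θ*`. -/
theorem stmt5 (θs β r θ : ℝ) (hθs : θs ∈ Set.Ioo 0 π) (hβ : 1 ≤ β)
    (hr : 0 < r) (hθ : θ ∈ Set.Ioo 0 θs) :
    Real.sign
        (deriv (fun z₂ => deriv (fun z₁ =>
            Real.sin θs ^ (-β) *
              (z₁ ^ 2 + z₂ ^ 2 - 2 * z₁ * z₂ * Real.cos θs) ^ (β / 2)) (r * Real.cos θ))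
          (r * Real.cos (θs - θ)))
      = Real.sign ((β - 2) / β * Real.cos (θs - 2 * θ) - Real.cos θs) :=
  stmt5_general θs β r θ hθs hβ hr
end

section
/- Let u₁, …, u_N ∈ ℝ^D be nonzero vectors in the nonnegative orthant, ‖·‖ a norm on ℝ^D with dual norm ‖·‖_* (restricted to the nonnegative orthant: ‖q‖_* = max{⟨q, p⟩ : ‖p‖ = 1, p ≥ 0}), and Z := ‖Σ_{n=1}^N u_n/‖u_n‖_*‖_*. If β > log(N)/(log(N) − log(Z)) (equivalently N^{1−1/β} > Z), then max_{‖p‖=1, p≥0} ∏_{i=1}^N ⟨p, u_i/‖u_i‖_*⟩^β < 1/N^N. -/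
open Finset

/-- Upper bound on the specialization threshold: with users normalized in the dual norm,
if `N^{1−1/β} > Z = ‖∑ u_n‖_*`, then every nonnegative unit-norm `p` has
`∏ i ⟨p, u_i⟩^β < 1/N^N`. -/
theorem stmt8 (N D : ℕ) (hN : 1 ≤ N) (hD : 1 ≤ D)
    (nrm : (Fin D → ℝ) → ℝ)
    (hnn : ∀ p, 0 ≤ nrm p)
    (htri : ∀ p q, nrm (p + q) ≤ nrm p + nrm q)
    (hhom : ∀ (c : ℝ) (p : Fin D → ℝ), nrm (c • p) = |c| * nrm p)
    (hdef : ∀ p, nrm p = 0 → p = 0)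
    (dstar : (Fin D → ℝ) → ℝ)
    (hdstar : ∀ q, dstar q =
      sSup {x | ∃ p : Fin D → ℝ, nrm p = 1 ∧ (∀ d, 0 ≤ p d) ∧ x = ∑ d, q d * p d})
    (u : Fin N → Fin D → ℝ)
    (hu0 : ∀ n d, 0 ≤ u n d)
    (hune : ∀ n, u n ≠ 0)
    (hunorm : ∀ n, dstar (u n) = 1)
    (Z : ℝ) (hZ : Z = dstar (∑ n, u n))
    (β : ℝ) (hβ : 1 ≤ β)
    (hcond : Z < (N : ℝ) ^ (1 - 1 / β)) :
    ∀ p : Fin D → ℝ, nrm p = 1 → (∀ d, 0 ≤ p d) →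
      ∏ i, (∑ d, p d * u i d) ^ β < 1 / (N : ℝ) ^ N := by
  intro p hp1 hp0
  have hβ0 : 0 < β := lt_of_lt_of_le one_pos hβ
  have hN0 : (0:ℝ) < N := by exact_mod_cast hN
  have htarget : (0:ℝ) < 1 / (N : ℝ) ^ N := by positivity
  set S : (Fin D → ℝ) → Set ℝ :=
    fun q => {x | ∃ p : Fin D → ℝ, nrm p = 1 ∧ (∀ d, 0 ≤ p d) ∧ x = ∑ d, q d * p d} with hS
  -- each S (u n) is bounded above
  have hbdd : ∀ n, BddAbove (S (u n)) := by
    intro n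
    by_contra h
    have := Real.sSup_of_not_bddAbove h
    rw [← hdstar] at this
    rw [hunorm n] at this
    norm_num at this
  set a : Fin N → ℝ := fun i => ∑ d, p d * u i d with ha
  have ha0 : ∀ i, 0 ≤ a i := fun i => Finset.sum_nonneg fun d _ => mul_nonneg (hp0 d) (hu0 i d)
  have hmem : ∀ i, a i ∈ S (u i) := by
    intro i
    exact ⟨p, hp1, hp0, by simp [ha, mul_comm]⟩
  have ha1 : ∀ i, a i ≤ 1 := by
    intro i
    have := le_csSup (hbdd i) (hmem i)
    rwa [← hdstar, hunorm i] at this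
  -- sum bound
  have hsum_mem : (∑ i, a i) ∈ S (∑ n, u n) := by
    refine ⟨p, hp1, hp0, ?_⟩
    rw [Finset.sum_comm]
    simp [ha, Finset.sum_apply, Finset.mul_sum, Finset.sum_mul, mul_comm]
  have hSbdd : BddAbove (S (∑ n, u n)) := by
    refine ⟨(N : ℝ), ?_⟩
    rintro x ⟨q, hq1, hq0, rfl⟩
    have : ∑ d, (∑ n, u n) d * q d = ∑ n, ∑ d, u n d * q d := by
      rw [Finset.sum_comm]
      simp [Finset.sum_apply, Finset.sum_mul]
    rw [this]
    calc ∑ n, ∑ d, u n d * q d ≤ ∑ n : Fin N, (1:ℝ) := by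
          refine Finset.sum_le_sum fun n _ => ?_
          have h1 : (∑ d, u n d * q d) ∈ S (u n) := ⟨q, hq1, hq0, rfl⟩
          have := le_csSup (hbdd n) h1
          rwa [← hdstar, hunorm n] at this
      _ = N := by simp
  have hsumZ : ∑ i, a i ≤ Z := by
    rw [hZ, hdstar]
    exact le_csSup hSbdd hsum_mem
  -- case: some a i = 0
  by_cases hz : ∃ i, a i = 0
  · obtain ⟨i, hi⟩ := hz
    have : ∏ j, a j ^ β = 0 := by
      apply Finset.prod_eq_zero (Finset.mem_univ i)
      rw [hi, Real.zero_rpow (ne_of_gt hβ0)]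
    rw [this]; exact htarget
  push_neg at hz
  have hapos : ∀ i, 0 < a i := fun i => lt_of_le_of_ne (ha0 i) (Ne.symm (hz i))
  have : Nonempty (Fin N) := ⟨⟨0, hN⟩⟩
  have hZpos : 0 < Z :=
    lt_of_lt_of_le (Finset.sum_pos (fun i _ => hapos i) Finset.univ_nonempty) hsumZ
  -- AM-GM: ∏ a i ≤ (Z/N)^N
  have hamgm : ∏ i, a i ≤ (Z / N) ^ (N:ℝ) := by
    have hw : ∀ i ∈ (Finset.univ : Finset (Fin N)), (0:ℝ) ≤ 1 / N := fun _ _ => by positivity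
    have hw1 : ∑ _i : Fin N, (1:ℝ)/N = 1 := by
      simp [Finset.sum_const, Finset.card_univ]
      field_simp
    have h := Real.geom_mean_le_arith_mean_weighted Finset.univ (fun _ => 1/N) a hw hw1
      (fun i _ => ha0 i)
    have hle : ∑ i : Fin N, (1/(N:ℝ)) * a i ≤ Z / N := by
      rw [← Finset.mul_sum, one_div, div_eq_mul_inv Z, mul_comm Z]
      exact mul_le_mul_of_nonneg_left hsumZ (inv_nonneg.mpr hN0.le)
    have h2 : ∏ i, a i ^ ((1:ℝ)/N) ≤ Z / N := le_trans h hle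
    have h3 : (∏ i, a i ^ ((1:ℝ)/N)) = (∏ i, a i) ^ ((1:ℝ)/N) :=
      Real.finset_prod_rpow _ _ (fun i _ => ha0 i) _
    rw [h3] at h2
    have hprodpos : 0 < ∏ i, a i := Finset.prod_pos fun i _ => hapos i
    have := Real.rpow_le_rpow (Real.rpow_nonneg hprodpos.le _) h2 (le_of_lt hN0)
    rwa [← Real.rpow_mul (le_of_lt hprodpos),
      one_div, inv_mul_cancel₀ (ne_of_gt hN0), Real.rpow_one] at this
  -- combine
  have hprodpos : 0 < ∏ i, a i := Finset.prod_pos fun i _ => hapos i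
  have hstep : ∏ i, a i ^ β ≤ ((Z / N) ^ (N:ℝ)) ^ β := by
    rw [Real.finset_prod_rpow _ _ (fun i _ => ha0 i)]
    exact Real.rpow_le_rpow (le_of_lt hprodpos) hamgm (le_of_lt hβ0)
  have hfin : ((Z / N) ^ (N:ℝ)) ^ β < 1 / (N:ℝ) ^ (N:ℝ) := by
    rw [← Real.rpow_mul (by positivity)]
    have key : (N:ℝ) ^ (1 - 1/β) = N * (N:ℝ) ^ (-(1/β)) := by
      rw [sub_eq_add_neg, Real.rpow_add hN0, Real.rpow_one]
    have hZN : Z / N < (N:ℝ) ^ (-(1/β)) := by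
      rw [div_lt_iff₀ hN0, mul_comm, ← key]
      exact hcond
    have hNβ : 0 < (N:ℝ) * β := by positivity
    calc (Z / N) ^ ((N:ℝ) * β) < ((N:ℝ) ^ (-(1/β))) ^ ((N:ℝ) * β) := by
          apply Real.rpow_lt_rpow (by positivity) hZN hNβ
      _ = (N:ℝ) ^ ((-(1/β)) * ((N:ℝ) * β)) := by
          rw [← Real.rpow_mul (le_of_lt hN0)]
      _ = (N:ℝ) ^ (-(N:ℝ)) := by
          congr 1
          field_simp
      _ = 1 / (N:ℝ) ^ (N:ℝ) := by
          rw [Real.rpow_neg (le_of_lt hN0), one_div]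
  rw [show (1 : ℝ) / (N:ℝ) ^ N = 1 / (N:ℝ) ^ (N:ℝ) by rw [Real.rpow_natCast]]
  exact lt_of_le_of_lt hstep hfin
end

section
/- Let θ* ∈ (0, π) and β ≥ 1, and suppose θ^G ∈ (0, θ*/2) is a critical point of θ ↦ cos^β(θ) + cos^β(θ* − θ) (i.e., sin(θ^G) cos^{β−1}(θ^G) = sin(θ* − θ^G) cos^{β−1}(θ* − θ^G)). Then cos^β(θ^G) + cos^β(θ* − θ^G) = sin(θ*) cos^{β−1}(θ* − θ^G) / sin(θ^G). -/
open Real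

theorem Real.rpow_eq_mul_rpow_sub_one {x : ℝ} (hx : x ≠ 0) (β : ℝ) : x ^ β = x * x ^ (β - 1) := by
  rw [rpow_sub_one hx, mul_div_cancel₀ _ hx]

/-- Multiplying by `sin a` and using the first-order condition on the `cos a ^ β` term turns the
left side into `(cos a * sin b + sin a * cos b) * cos b ^ (β - 1)`. -/
theorem Real.cos_rpow_add_cos_rpow_of_sin_mul_eq {a b β : ℝ} (ha : cos a ≠ 0) (hb : cos b ≠ 0)
    (hsin : sin a ≠ 0) (hFOC : sin a * cos a ^ (β - 1) = sin b * cos b ^ (β - 1)) :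
    cos a ^ β + cos b ^ β = sin (a + b) * cos b ^ (β - 1) / sin a := by
  rw [eq_div_iff hsin, sin_add, rpow_eq_mul_rpow_sub_one ha, rpow_eq_mul_rpow_sub_one hb]
  linear_combination cos a * hFOC

theorem stmt12_general (θs θG β : ℝ)
    (hG0 : 0 < θG) (hG1 : θG < θs / 2) (hhalf : θs / 2 < π / 2)
    (hcos : 0 < Real.cos (θs - θG))
    (hFOC : Real.sin θG * Real.cos θG ^ (β - 1)
      = Real.sin (θs - θG) * Real.cos (θs - θG) ^ (β - 1)) :
    Real.cos θG ^ β + Real.cos (θs - θG) ^ β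
      = Real.sin θs * Real.cos (θs - θG) ^ (β - 1) / Real.sin θG := by
  have hcosG : 0 < cos θG := cos_pos_of_mem_Ioo ⟨by linarith, by linarith⟩
  have hsinG : 0 < sin θG := sin_pos_of_pos_of_lt_pi hG0 (by linarith [pi_pos])
  simpa using cos_rpow_add_cos_rpow_of_sin_mul_eq hcosG.ne' hcos.ne' hsinG.ne' hFOC

/-- If `θ^G ∈ (0, θ*/2)` satisfies the first-order condition
`sin(θ^G) cos^{β−1}(θ^G) = sin(θ* − θ^G) cos^{β−1}(θ* − θ^G)`, then
`cos^β(θ^G) + cos^β(θ* − θ^G) = sin(θ*) cos^{β−1}(θ* − θ^G) / sin(θ^G)`. -/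
theorem stmt12 (θs θG β : ℝ) (hθs : θs ∈ Set.Ioo 0 π) (hβ : 1 ≤ β)
    (hG0 : 0 < θG) (hG1 : θG < θs / 2) (hhalf : θs / 2 < π / 2)
    (hcos : 0 < Real.cos (θs - θG))
    (hFOC : Real.sin θG * Real.cos θG ^ (β - 1)
      = Real.sin (θs - θG) * Real.cos (θs - θG) ^ (β - 1)) :
    Real.cos θG ^ β + Real.cos (θs - θG) ^ β
      = Real.sin θs * Real.cos (θs - θG) ^ (β - 1) / Real.sin θG :=
  stmt12_general θs θG β hG0 hG1 hhalf hcos hFOC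
end

section
/- Let θ* ∈ (0, π/2], β a real with β > 2/(1 − cos θ*), and let θ^G ∈ [0, θ*/2] maximize θ ↦ cos^β(θ) + cos^β(θ* − θ) subject to θ ≤ θ*/2. Then θ^G < θ*/2; i.e., when β exceeds the threshold, the maximum of cos^β(θ) + cos^β(θ* − θ) over [0, θ*] is not attained at θ*/2. -/
/-!
Put `h = cos ^ (β - 1) * sin`. The derivative of `g θ = cos^β θ + cos^β (θ* - θ)` is
`β (h (θ* - θ) - h θ)`, and `h' = cos ^ (β - 2) * (1 - β sin²)`. The threshold says exactly
`β sin² (θ*/2) = β (1 - cos θ*) / 2 > 1`, so `h` is strictly decreasing near `θ*/2`; hence `g' < 0`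
just left of `θ*/2`, and `g (θ*/2 - δ) > g (θ*/2)` for small `δ > 0`.
-/

open Real Set Topology

theorem hasDerivAt_cos_rpow_mul_sin {p x : ℝ} (hx : 0 < cos x) :
    HasDerivAt (fun y => cos y ^ p * sin y)
      (cos x ^ (p - 1) * (1 - (p + 1) * sin x ^ 2)) x := by
  have hcos := (hasDerivAt_cos x).rpow_const (p := p) (Or.inl hx.ne')
  refine (hcos.mul (hasDerivAt_sin x)).congr_deriv ?_
  have hpow : cos x ^ p = cos x ^ (p - 1) * cos x := by
    rw [← rpow_add_one hx.ne', sub_add_cancel]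
  rw [hpow]
  linear_combination cos x ^ (p - 1) * cos_sq' x

theorem strictAntiOn_cos_rpow_mul_sin {p a b : ℝ}
    (h : ∀ x ∈ Icc a b, 0 < cos x ∧ 1 < (p + 1) * sin x ^ 2) :
    StrictAntiOn (fun x => cos x ^ p * sin x) (Icc a b) := by
  refine strictAntiOn_of_deriv_neg (convex_Icc a b) ?_ fun x hx => ?_
  · exact (continuous_cos.continuousOn.rpow_const fun x hx => Or.inl (h x hx).1.ne').mul
      continuous_sin.continuousOn
  · rw [interior_Icc] at hx
    obtain ⟨hcos, hsin⟩ := h x (Ioo_subset_Icc_self hx)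
    rw [(hasDerivAt_cos_rpow_mul_sin hcos).deriv]
    exact mul_neg_of_pos_of_neg (rpow_pos_of_pos hcos _) (by linarith)

theorem hasDerivAt_cos_rpow_add_cos_sub_rpow {s β θ : ℝ} (h₁ : 0 < cos θ) (h₂ : 0 < cos (s - θ)) :
    HasDerivAt (fun θ => cos θ ^ β + cos (s - θ) ^ β)
      (β * (cos (s - θ) ^ (β - 1) * sin (s - θ) - cos θ ^ (β - 1) * sin θ)) θ := by
  have hleft := (hasDerivAt_cos θ).rpow_const (p := β) (Or.inl h₁.ne')
  have hright := ((hasDerivAt_cos (s - θ)).comp θ ((hasDerivAt_id θ).const_sub s)).rpow_const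
    (p := β) (Or.inl h₂.ne')
  exact (hleft.add hright).congr_deriv (by simp only [Function.comp_apply]; ring)

theorem strictAntiOn_cos_rpow_add_cos_sub_rpow {s β δ : ℝ} (hβ : 0 < β)
    (h : ∀ x ∈ Icc (s / 2 - δ) (s / 2 + δ), 0 < cos x ∧ 1 < β * sin x ^ 2) :
    StrictAntiOn (fun θ => cos θ ^ β + cos (s - θ) ^ β) (Icc (s / 2 - δ) (s / 2)) := by
  have hmem : ∀ θ ∈ Icc (s / 2 - δ) (s / 2), θ ∈ Icc (s / 2 - δ) (s / 2 + δ) ∧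
      s - θ ∈ Icc (s / 2 - δ) (s / 2 + δ) := fun θ ⟨h₁, h₂⟩ =>
    ⟨⟨h₁, by linarith⟩, ⟨by linarith, by linarith⟩⟩
  have hanti : StrictAntiOn (fun x => cos x ^ (β - 1) * sin x) (Icc (s / 2 - δ) (s / 2 + δ)) :=
    strictAntiOn_cos_rpow_mul_sin (by simpa only [sub_add_cancel] using h)
  refine strictAntiOn_of_deriv_neg (convex_Icc _ _) ?_ fun θ hθ => ?_
  · refine ContinuousOn.add ?_ ?_
    · exact continuous_cos.continuousOn.rpow_const fun θ hθ =>
        Or.inl (h θ (hmem θ hθ).1).1.ne'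
    · exact (continuous_cos.comp (continuous_sub_left s)).continuousOn.rpow_const fun θ hθ =>
        Or.inl (h _ (hmem θ hθ).2).1.ne'
  · rw [interior_Icc] at hθ
    obtain ⟨hθ₁, hθ₂⟩ := hmem θ (Ioo_subset_Icc_self hθ)
    rw [(hasDerivAt_cos_rpow_add_cos_sub_rpow (h θ hθ₁).1 (h _ hθ₂).1).deriv]
    have := hanti hθ₁ hθ₂ (by linarith [hθ.2])
    exact mul_neg_of_pos_of_neg hβ (sub_neg.mpr this)

theorem exists_strictAntiOn_cos_rpow_add_cos_sub_rpow {s β : ℝ} (hs₀ : 0 < s) (hsπ : s < π)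
    (hβ : 1 < β * sin (s / 2) ^ 2) :
    ∃ δ, 0 < δ ∧ δ ≤ s / 2 ∧
      StrictAntiOn (fun θ => cos θ ^ β + cos (s - θ) ^ β) (Icc (s / 2 - δ) (s / 2)) := by
  have hβ₀ : 0 < β := pos_of_mul_pos_left (one_pos.trans hβ) (sq_nonneg _)
  have hcos : 0 < cos (s / 2) := cos_pos_of_mem_Ioo ⟨by linarith, by linarith⟩
  have hev : ∀ᶠ x in 𝓝 (s / 2), 0 < cos x ∧ 1 < β * sin x ^ 2 :=
    (continuousAt_const.eventually_lt continuous_cos.continuousAt hcos).and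
      (continuousAt_const.eventually_lt (by fun_prop) hβ)
  obtain ⟨ε, hε, hball⟩ := Metric.eventually_nhds_iff.mp hev
  refine ⟨min (ε / 2) (s / 2), by positivity, min_le_right _ _,
    strictAntiOn_cos_rpow_add_cos_sub_rpow hβ₀ fun x hx => hball ?_⟩
  have := min_le_left (ε / 2) (s / 2)
  rw [Real.dist_eq, abs_lt]
  constructor <;> linarith [hx.1, hx.2]

/-- Above the specialization threshold `β > 2/(1 − cos θ*)`, a maximizer `θ^G` of
`θ ↦ cos^β θ + cos^β(θ* − θ)` over `[0, θ*/2]` satisfies `θ^G < θ*/2`. -/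
theorem stmt18 (θs β θG : ℝ) (hθs0 : 0 < θs) (hθs1 : θs ≤ π / 2)
    (hβ : 2 / (1 - Real.cos θs) < β)
    (hG : θG ∈ Set.Icc (0 : ℝ) (θs / 2))
    (hmax : ∀ θ ∈ Set.Icc (0 : ℝ) (θs / 2),
      Real.cos θ ^ β + Real.cos (θs - θ) ^ β
        ≤ Real.cos θG ^ β + Real.cos (θs - θG) ^ β) :
    θG < θs / 2 := by
  have hcos : 0 < 1 - cos θs := by
    linarith [cos_zero ▸ cos_lt_cos_of_nonneg_of_le_pi le_rfl (by linarith [pi_pos]) hθs0]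
  have hsin : 1 < β * sin (θs / 2) ^ 2 := by
    rw [sin_sq_eq_half_sub, mul_div_cancel₀ _ two_ne_zero]
    rw [div_lt_iff₀ hcos] at hβ
    linarith
  obtain ⟨δ, hδ, hδs, hanti⟩ :=
    exists_strictAntiOn_cos_rpow_add_cos_sub_rpow hθs0 (by linarith [pi_pos]) hsin
  refine lt_of_le_of_ne hG.2 fun hθG => ?_
  subst hθG
  have hlt := hanti ⟨le_rfl, by linarith⟩ ⟨by linarith, le_rfl⟩ (by linarith)
  exact (hmax _ ⟨by linarith, by linarith⟩).not_gt hlt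
end

section
/- Let 0 < C₂ < 1 and C₁ > 0 and β ≥ 1, and define F: ℝ_{≥0} → [0,1] by F(q) = C₂^{(2n+2)β} if q ∈ C₁^{1/β} C₂^{2n+1}[C₂, 1], F(q) = C₁^{−2} C₂^{−2nβ} q^{2β} if q ∈ C₁^{1/β} C₂^{2n}[C₂, 1] (n ≥ 0), and F(q) = 1 if q ≥ C₁^{1/β}. Then F is a well-defined, nondecreasing, right-continuous function with F(0) = 0 (limit) and F(q) → 1, i.e., F is a cumulative distribution function; moreover for all q in the domain, √(F(q) F(q C₂)) = min(1, C₃^{−1} q^β) where C₃ = C₁ C₂^{−β}. -/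
open Real Filter

section Aux

variable (C₁ C₂ β : ℝ)

lemma aux_AC (hC₁ : 0 < C₁) (hC₂0 : 0 < C₂) (hβ0 : 0 < β) (x : ℝ) :
    (C₁ ^ (1/β) * C₂ ^ x) ^ (2*β) = C₁ ^ (2:ℝ) * C₂ ^ (x * (2*β)) := by
  have hA0 : (0:ℝ) < C₁ ^ (1/β) := Real.rpow_pos_of_pos hC₁ _
  rw [Real.mul_rpow hA0.le (Real.rpow_pos_of_pos hC₂0 x).le, ← Real.rpow_mul hC₂0.le,
    ← Real.rpow_mul hC₁.le]
  congr 1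
  field_simp

lemma aux_Aβ (hC₁ : 0 < C₁) (hβ0 : 0 < β) : (C₁ ^ (1/β)) ^ β = C₁ := by
  rw [← Real.rpow_mul hC₁.le, one_div, inv_mul_cancel₀ hβ0.ne', Real.rpow_one]

lemma aux_mem (hC₁ : 0 < C₁) (hC₂0 : 0 < C₂) (hC₂1 : C₂ < 1)
    (q : ℝ) (hq : 0 < q) (hqA : q ≤ C₁ ^ (1/β)) :
    ∃ m : ℕ, C₁ ^ (1/β) * C₂ ^ ((m:ℝ)+1) ≤ q ∧ q ≤ C₁ ^ (1/β) * C₂ ^ (m:ℝ) := by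
  set A := C₁ ^ (1/β) with hAdef
  have hA0 : 0 < A := Real.rpow_pos_of_pos hC₁ _
  set t := Real.logb C₂ (q / A) with ht
  have hqt : A * C₂ ^ t = q := by
    rw [ht, Real.rpow_logb hC₂0 (ne_of_lt hC₂1) (div_pos hq hA0)]
    field_simp
  have ht0 : 0 ≤ t := by
    rw [ht, Real.logb, div_nonneg_iff]
    right
    constructor
    · exact Real.log_nonpos (by positivity) (by rw [div_le_one hA0]; exact hqA)
    · exact (Real.log_neg hC₂0 hC₂1).le
  refine ⟨⌊t⌋₊, ?_, ?_⟩
  · rw [← hqt]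
    exact mul_le_mul_of_nonneg_left
      (Real.rpow_le_rpow_of_exponent_ge hC₂0 hC₂1.le (Nat.lt_floor_add_one t).le) hA0.le
  · rw [← hqt]
    exact mul_le_mul_of_nonneg_left
      (Real.rpow_le_rpow_of_exponent_ge hC₂0 hC₂1.le (Nat.floor_le ht0)) hA0.le

lemma aux_mem_strict (hC₁ : 0 < C₁) (hC₂0 : 0 < C₂) (hC₂1 : C₂ < 1)
    (q : ℝ) (hq : 0 < q) (hqA : q < C₁ ^ (1/β)) :
    ∃ m : ℕ, C₁ ^ (1/β) * C₂ ^ ((m:ℝ)+1) ≤ q ∧ q < C₁ ^ (1/β) * C₂ ^ (m:ℝ) := by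
  set A := C₁ ^ (1/β) with hAdef
  have hA0 : 0 < A := Real.rpow_pos_of_pos hC₁ _
  set t := Real.logb C₂ (q / A) with ht
  have hqt : A * C₂ ^ t = q := by
    rw [ht, Real.rpow_logb hC₂0 (ne_of_lt hC₂1) (div_pos hq hA0)]
    field_simp
  have ht0 : 0 < t := by
    rw [ht, Real.logb, div_pos_iff]
    right
    exact ⟨Real.log_neg (by positivity) (by rw [div_lt_one hA0]; exact hqA),
      Real.log_neg hC₂0 hC₂1⟩
  have hkpos : 0 < ⌈t⌉₊ := Nat.ceil_pos.2 ht0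
  have hcast : ((⌈t⌉₊ - 1 : ℕ) : ℝ) = (⌈t⌉₊ : ℝ) - 1 := by
    push_cast [Nat.cast_sub hkpos] ; ring
  refine ⟨⌈t⌉₊ - 1, ?_, ?_⟩
  · rw [← hqt, hcast]
    refine mul_le_mul_of_nonneg_left
      (Real.rpow_le_rpow_of_exponent_ge hC₂0 hC₂1.le ?_) hA0.le
    have := Nat.le_ceil t
    linarith
  · rw [← hqt, hcast]
    refine mul_lt_mul_of_pos_left
      (Real.rpow_lt_rpow_of_exponent_gt hC₂0 hC₂1 ?_) hA0
    have := Nat.ceil_lt_add_one ht0.le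
    linarith

variable (F : ℝ → ℝ)
variable (hF1 : ∀ n : ℕ, ∀ q : ℝ,
      C₁ ^ (1 / β) * C₂ ^ (2 * (n : ℝ) + 2) ≤ q →
      q ≤ C₁ ^ (1 / β) * C₂ ^ (2 * (n : ℝ) + 1) →
      F q = C₂ ^ ((2 * (n : ℝ) + 2) * β))
variable (hF2 : ∀ n : ℕ, ∀ q : ℝ,
      C₁ ^ (1 / β) * C₂ ^ (2 * (n : ℝ) + 1) ≤ q →
      q ≤ C₁ ^ (1 / β) * C₂ ^ (2 * (n : ℝ)) →
      F q = C₁ ^ (-(2 : ℝ)) * C₂ ^ (-(2 * (n : ℝ) * β)) * q ^ (2 * β))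

include hF1 in
lemma aux_odd (m : ℕ) (hodd : Odd m) (q : ℝ)
    (h1 : C₁ ^ (1/β) * C₂ ^ ((m:ℝ)+1) ≤ q) (h2 : q ≤ C₁ ^ (1/β) * C₂ ^ (m:ℝ)) :
    F q = C₂ ^ (((m:ℝ)+1) * β) := by
  obtain ⟨n, hn⟩ := hodd
  have hm : (m:ℝ) = 2*(n:ℝ)+1 := by push_cast [hn]; ring
  rw [hm] at h1 h2
  rw [hF1 n q (by rw [show 2*(n:ℝ)+2 = 2*(n:ℝ)+1+1 by ring]; exact h1) h2, hm]
  congr 1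
  ring

include hF2 in
lemma aux_even (m : ℕ) (heven : Even m) (q : ℝ)
    (h1 : C₁ ^ (1/β) * C₂ ^ ((m:ℝ)+1) ≤ q) (h2 : q ≤ C₁ ^ (1/β) * C₂ ^ (m:ℝ)) :
    F q = C₁ ^ (-(2:ℝ)) * C₂ ^ (-((m:ℝ) * β)) * q ^ (2*β) := by
  obtain ⟨n, hn⟩ := heven
  have hm : (m:ℝ) = 2*(n:ℝ) := by push_cast [hn]; ring
  rw [hm] at h1 h2
  rw [hF2 n q h1 h2, hm]

include hF1 hF2 in
lemma aux_bounds (hC₁ : 0 < C₁) (hC₂0 : 0 < C₂) (hC₂1 : C₂ < 1) (hβ0 : 0 < β)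
    (m : ℕ) (q : ℝ)
    (h1 : C₁ ^ (1/β) * C₂ ^ ((m:ℝ)+1) ≤ q) (h2 : q ≤ C₁ ^ (1/β) * C₂ ^ (m:ℝ)) :
    C₂ ^ (((m:ℝ)+2) * β) ≤ F q ∧ F q ≤ C₂ ^ ((m:ℝ) * β) := by
  have hA0 : (0:ℝ) < C₁ ^ (1/β) := Real.rpow_pos_of_pos hC₁ _
  have hq0 : 0 < q := lt_of_lt_of_le (by positivity) h1
  rcases Nat.even_or_odd m with he | ho
  · rw [aux_even C₁ C₂ β F hF2 m he q h1 h2]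
    have hb1 : (C₁ ^ (1/β) * C₂ ^ ((m:ℝ)+1)) ^ (2*β) ≤ q ^ (2*β) :=
      Real.rpow_le_rpow (by positivity) h1 (by positivity)
    have hb2 : q ^ (2*β) ≤ (C₁ ^ (1/β) * C₂ ^ (m:ℝ)) ^ (2*β) :=
      Real.rpow_le_rpow hq0.le h2 (by positivity)
    rw [aux_AC C₁ C₂ β hC₁ hC₂0 hβ0] at hb1 hb2
    constructor
    · calc C₂ ^ (((m:ℝ)+2) * β)
          = C₁ ^ (-(2:ℝ)) * C₂ ^ (-((m:ℝ)*β)) * (C₁ ^ (2:ℝ) * C₂ ^ (((m:ℝ)+1) * (2*β))) := by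
            rw [show C₁ ^ (-(2:ℝ)) * C₂ ^ (-((m:ℝ)*β)) * (C₁ ^ (2:ℝ) * C₂ ^ (((m:ℝ)+1) * (2*β)))
              = (C₁ ^ (-(2:ℝ)) * C₁ ^ (2:ℝ)) * (C₂ ^ (-((m:ℝ)*β)) * C₂ ^ (((m:ℝ)+1) * (2*β))) by ring,
              ← Real.rpow_add hC₁, ← Real.rpow_add hC₂0]
            norm_num
            congr 1
            ring
      _ ≤ _ := by
            have : (0:ℝ) < C₁ ^ (-(2:ℝ)) * C₂ ^ (-((m:ℝ)*β)) := by positivity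
            exact mul_le_mul_of_nonneg_left hb1 this.le
    · calc C₁ ^ (-(2:ℝ)) * C₂ ^ (-((m:ℝ)*β)) * q ^ (2*β)
          ≤ C₁ ^ (-(2:ℝ)) * C₂ ^ (-((m:ℝ)*β)) * (C₁ ^ (2:ℝ) * C₂ ^ ((m:ℝ) * (2*β))) := by
            have : (0:ℝ) < C₁ ^ (-(2:ℝ)) * C₂ ^ (-((m:ℝ)*β)) := by positivity
            exact mul_le_mul_of_nonneg_left hb2 this.le
      _ = C₂ ^ ((m:ℝ) * β) := by
            rw [show C₁ ^ (-(2:ℝ)) * C₂ ^ (-((m:ℝ)*β)) * (C₁ ^ (2:ℝ) * C₂ ^ ((m:ℝ) * (2*β)))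
              = (C₁ ^ (-(2:ℝ)) * C₁ ^ (2:ℝ)) * (C₂ ^ (-((m:ℝ)*β)) * C₂ ^ ((m:ℝ) * (2*β))) by ring,
              ← Real.rpow_add hC₁, ← Real.rpow_add hC₂0]
            norm_num
            congr 1
            ring
  · rw [aux_odd C₁ C₂ β F hF1 m ho q h1 h2]
    constructor
    · exact Real.rpow_le_rpow_of_exponent_ge hC₂0 hC₂1.le
        (by nlinarith [Nat.cast_nonneg (α := ℝ) m])
    · exact Real.rpow_le_rpow_of_exponent_ge hC₂0 hC₂1.le
        (by nlinarith [Nat.cast_nonneg (α := ℝ) m])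

end Aux

/-- The piecewise conditional-quality distribution of the infinite-producer limit:
`F` is a nondecreasing, right-continuous cdf with `F → 0` at `0⁺` and `F → 1` at `∞`,
and `√(F(q) F(q C₂)) = min(1, C₃^{−1} q^β)` where `C₃ = C₁ C₂^{−β}`. -/
theorem stmt19 (C₁ C₂ β : ℝ) (hC₁ : 0 < C₁) (hC₂0 : 0 < C₂) (hC₂1 : C₂ < 1)
    (hβ : 1 ≤ β) (F : ℝ → ℝ)
    (hrange : ∀ q : ℝ, 0 ≤ q → 0 ≤ F q ∧ F q ≤ 1)
    (hF1 : ∀ n : ℕ, ∀ q : ℝ,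
      C₁ ^ (1 / β) * C₂ ^ (2 * (n : ℝ) + 2) ≤ q →
      q ≤ C₁ ^ (1 / β) * C₂ ^ (2 * (n : ℝ) + 1) →
      F q = C₂ ^ ((2 * (n : ℝ) + 2) * β))
    (hF2 : ∀ n : ℕ, ∀ q : ℝ,
      C₁ ^ (1 / β) * C₂ ^ (2 * (n : ℝ) + 1) ≤ q →
      q ≤ C₁ ^ (1 / β) * C₂ ^ (2 * (n : ℝ)) →
      F q = C₁ ^ (-(2 : ℝ)) * C₂ ^ (-(2 * (n : ℝ) * β)) * q ^ (2 * β))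
    (hF3 : ∀ q : ℝ, C₁ ^ (1 / β) ≤ q → F q = 1) :
    MonotoneOn F (Set.Ioi 0) ∧
    (∀ q : ℝ, 0 < q → ContinuousWithinAt F (Set.Ici q) q) ∧
    Tendsto F (nhdsWithin 0 (Set.Ioi 0)) (nhds 0) ∧
    Tendsto F atTop (nhds 1) ∧
    (∀ q : ℝ, 0 < q →
      Real.sqrt (F q * F (q * C₂)) = min 1 ((C₁ * C₂ ^ (-β))⁻¹ * q ^ β)) := by
  have hβ0 : (0:ℝ) < β := lt_of_lt_of_le one_pos hβ
  have hA0 : (0:ℝ) < C₁ ^ (1/β) := Real.rpow_pos_of_pos hC₁ _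
  have hanti : ∀ {x y : ℝ}, x ≤ y → C₂ ^ y ≤ C₂ ^ x :=
    fun h => Real.rpow_le_rpow_of_exponent_ge hC₂0 hC₂1.le h
  -- Monotonicity
  have hmono : MonotoneOn F (Set.Ioi 0) := by
    intro p hp q hq hpq
    simp only [Set.mem_Ioi] at hp hq
    by_cases hqA : C₁ ^ (1/β) ≤ q
    · rw [hF3 q hqA]; exact (hrange p hp.le).2
    push_neg at hqA
    have hpA : p < C₁ ^ (1/β) := lt_of_le_of_lt hpq hqA
    obtain ⟨mp, hp1, hp2⟩ := aux_mem C₁ C₂ β hC₁ hC₂0 hC₂1 p hp hpA.le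
    obtain ⟨mq, hq1, hq2⟩ := aux_mem C₁ C₂ β hC₁ hC₂0 hC₂1 q hq hqA.le
    rcases lt_trichotomy mp mq with h | h | h
    · -- then p = q
      have hc : ((mp:ℝ)+1) ≤ (mq:ℝ) := by exact_mod_cast h
      have : q ≤ p := le_trans hq2 (le_trans
        (mul_le_mul_of_nonneg_left (hanti hc) hA0.le) hp1)
      rw [le_antisymm hpq this]
    · -- same interval
      subst h
      rcases Nat.even_or_odd mp with he | ho
      · rw [aux_even C₁ C₂ β F hF2 mp he p hp1 hp2,
          aux_even C₁ C₂ β F hF2 mp he q hq1 hq2]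
        have : p ^ (2*β) ≤ q ^ (2*β) := Real.rpow_le_rpow hp.le hpq (by positivity)
        have hc : (0:ℝ) < C₁ ^ (-(2:ℝ)) * C₂ ^ (-((mp:ℝ)*β)) := by positivity
        exact mul_le_mul_of_nonneg_left this hc.le
      · rw [aux_odd C₁ C₂ β F hF1 mp ho p hp1 hp2,
          aux_odd C₁ C₂ β F hF1 mp ho q hq1 hq2]
    · -- mp > mq
      rcases eq_or_lt_of_le (Nat.succ_le_of_lt h) with h1 | h1
      · -- adjacent: mp = mq + 1
        rcases Nat.even_or_odd mq with he | ho
        · -- mq even, mp odd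
          have hop : Odd mp := by rw [← h1]; exact Even.add_one he
          rw [aux_odd C₁ C₂ β F hF1 mp hop p hp1 hp2]
          refine le_trans ?_ (aux_bounds C₁ C₂ β F hF1 hF2 hC₁ hC₂0 hC₂1 hβ0 mq q hq1 hq2).1
          have : (mp:ℝ) + 1 = (mq:ℝ) + 2 := by
            rw [← h1]; push_cast; ring
          rw [this]
        · -- mq odd
          rw [aux_odd C₁ C₂ β F hF1 mq ho q hq1 hq2]
          refine le_trans (aux_bounds C₁ C₂ β F hF1 hF2 hC₁ hC₂0 hC₂1 hβ0 mp p hp1 hp2).2 ?_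
          refine hanti (mul_le_mul_of_nonneg_right ?_ hβ0.le)
          have : (mq:ℝ) + 1 ≤ (mp:ℝ) := by
            have : mq + 1 ≤ mp := h
            exact_mod_cast this
          linarith
      · -- mp ≥ mq + 2
        refine le_trans (aux_bounds C₁ C₂ β F hF1 hF2 hC₁ hC₂0 hC₂1 hβ0 mp p hp1 hp2).2
          (le_trans ?_ (aux_bounds C₁ C₂ β F hF1 hF2 hC₁ hC₂0 hC₂1 hβ0 mq q hq1 hq2).1)
        refine hanti (mul_le_mul_of_nonneg_right ?_ hβ0.le)
        have : mq + 2 ≤ mp := h1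
        have := (Nat.cast_le (α := ℝ)).2 this
        push_cast at this
        linarith
  -- Right continuity
  have hrc : ∀ q : ℝ, 0 < q → ContinuousWithinAt F (Set.Ici q) q := by
    intro q hq
    by_cases hqA : C₁ ^ (1/β) ≤ q
    · have heq : ∀ x ∈ Set.Ici q, F x = 1 := fun x hx => hF3 x (le_trans hqA hx)
      exact (continuousWithinAt_const (b := (1:ℝ))).congr heq (hF3 q hqA)
    · push_neg at hqA
      obtain ⟨m, h1, h2⟩ := aux_mem_strict C₁ C₂ β hC₁ hC₂0 hC₂1 q hq hqA
      have hmem : Set.Iio (C₁ ^ (1/β) * C₂ ^ (m:ℝ)) ∈ nhdsWithin q (Set.Ici q) :=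
        nhdsWithin_le_nhds (Iio_mem_nhds h2)
      rcases Nat.even_or_odd m with he | ho
      · have hg : ContinuousWithinAt
            (fun x : ℝ => C₁ ^ (-(2:ℝ)) * C₂ ^ (-((m:ℝ) * β)) * x ^ (2*β)) (Set.Ici q) q :=
          (continuousAt_const.mul
            (Real.continuousAt_rpow_const q (2*β) (Or.inl hq.ne'))).continuousWithinAt
        refine hg.congr_of_eventuallyEq ?_ ?_
        · filter_upwards [hmem, self_mem_nhdsWithin] with x hx1 hx2
          exact aux_even C₁ C₂ β F hF2 m he x (le_trans h1 hx2) (le_of_lt hx1)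
        · exact aux_even C₁ C₂ β F hF2 m he q h1 h2.le
      · have hg : ContinuousWithinAt
            (fun _ : ℝ => C₂ ^ (((m:ℝ)+1) * β)) (Set.Ici q) q := continuousWithinAt_const
        refine hg.congr_of_eventuallyEq ?_ ?_
        · filter_upwards [hmem, self_mem_nhdsWithin] with x hx1 hx2
          exact aux_odd C₁ C₂ β F hF1 m ho x (le_trans h1 hx2) (le_of_lt hx1)
        · exact aux_odd C₁ C₂ β F hF1 m ho q h1 h2.le
  -- Tendsto at 0+
  have hzero : Tendsto F (nhdsWithin 0 (Set.Ioi 0)) (nhds 0) := by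
    have hupb : ∀ q : ℝ, 0 < q → q < C₁ ^ (1/β) →
        F q ≤ C₂ ^ (-β) * C₁⁻¹ * q ^ β := by
      intro q hq hqA
      obtain ⟨m, h1, h2⟩ := aux_mem C₁ C₂ β hC₁ hC₂0 hC₂1 q hq hqA.le
      have hub := (aux_bounds C₁ C₂ β F hF1 hF2 hC₁ hC₂0 hC₂1 hβ0 m q h1 h2).2
      refine le_trans hub ?_
      -- C₂^(mβ) ≤ C₂^(-β) C₁⁻¹ q^β  since  q^β ≥ C₁ C₂^((m+1)β)
      have hqβ : (C₁ ^ (1/β) * C₂ ^ ((m:ℝ)+1)) ^ β ≤ q ^ β :=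
        Real.rpow_le_rpow (by positivity) h1 hβ0.le
      rw [Real.mul_rpow hA0.le (Real.rpow_pos_of_pos hC₂0 _).le,
        aux_Aβ C₁ β hC₁ hβ0, ← Real.rpow_mul hC₂0.le] at hqβ
      have key : C₂ ^ ((m:ℝ) * β) = C₂ ^ (-β) * C₁⁻¹ * (C₁ * C₂ ^ (((m:ℝ)+1) * β)) := by
        rw [show C₂ ^ (-β) * C₁⁻¹ * (C₁ * C₂ ^ (((m:ℝ)+1) * β))
          = (C₁⁻¹ * C₁) * (C₂ ^ (-β) * C₂ ^ (((m:ℝ)+1) * β)) by ring,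
          inv_mul_cancel₀ hC₁.ne', ← Real.rpow_add hC₂0, one_mul]
        congr 1
        ring
      rw [key]
      have hc : (0:ℝ) ≤ C₂ ^ (-β) * C₁⁻¹ := by positivity
      exact mul_le_mul_of_nonneg_left hqβ hc
    have htu : Tendsto (fun q : ℝ => C₂ ^ (-β) * C₁⁻¹ * q ^ β)
        (nhdsWithin 0 (Set.Ioi 0)) (nhds 0) := by
      have h1 : Tendsto (fun q : ℝ => q ^ β) (nhds 0) (nhds 0) := by
        have := (Real.continuousAt_rpow_const 0 β (Or.inr hβ0.le)).tendsto
        rwa [Real.zero_rpow hβ0.ne'] at this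
      have h2 := (h1.const_mul (C₂ ^ (-β) * C₁⁻¹)).mono_left
        (nhdsWithin_le_nhds (s := Set.Ioi (0:ℝ)))
      simpa using h2
    refine squeeze_zero' ?_ ?_ htu
    · filter_upwards [self_mem_nhdsWithin] with x hx
      exact (hrange x (le_of_lt hx)).1
    · filter_upwards [self_mem_nhdsWithin,
        nhdsWithin_le_nhds (Iio_mem_nhds hA0)] with x hx1 hx2
      exact hupb x hx1 hx2
  -- Tendsto at ⊤
  have htop : Tendsto F atTop (nhds 1) := by
    have hev : ∀ᶠ q in (atTop : Filter ℝ), F q = 1 :=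
      (eventually_ge_atTop (C₁ ^ (1/β))).mono (fun q hq => hF3 q hq)
    exact Tendsto.congr' (hev.mono fun q h => h.symm) tendsto_const_nhds
  refine ⟨hmono, hrc, hzero, htop, ?_⟩
  -- the sqrt identity
  intro q hq
  have hc0 : 0 < C₁⁻¹ * C₂ ^ β * q ^ β := by positivity
  have hmin' : (C₁ * C₂ ^ (-β))⁻¹ * q ^ β = C₁⁻¹ * C₂ ^ β * q ^ β := by
    rw [Real.rpow_neg hC₂0.le, mul_inv, inv_inv]
  rw [hmin']
  have hsq : C₁ ^ (-(2:ℝ)) * C₂ ^ (2*β) * q ^ (2*β) = (C₁⁻¹ * C₂ ^ β * q ^ β) ^ 2 := by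
    rw [pow_two, show -(2:ℝ) = (-1)+(-1) by norm_num, Real.rpow_add hC₁,
      Real.rpow_neg_one, show 2*β = β + β by ring, Real.rpow_add hC₂0, Real.rpow_add hq]
    ring
  have hAinv : (C₁ ^ (1/β) * C₂⁻¹) ^ β = C₁ * (C₂ ^ β)⁻¹ := by
    rw [Real.mul_rpow hA0.le (by positivity), aux_Aβ C₁ β hC₁ hβ0, Real.inv_rpow hC₂0.le]
  by_cases hcase1 : C₁ ^ (1/β) ≤ q * C₂
  · -- both arguments are ≥ A
    have hq1 : C₁ ^ (1/β) ≤ q := le_trans hcase1 (by nlinarith)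
    rw [hF3 q hq1, hF3 _ hcase1, one_mul, Real.sqrt_one]
    symm
    rw [min_eq_left]
    have hge : C₁ ^ (1/β) * C₂⁻¹ ≤ q := by
      rw [mul_comm, ← div_eq_inv_mul, div_le_iff₀ hC₂0]
      exact hcase1
    calc (1:ℝ) = C₁⁻¹ * C₂ ^ β * ((C₁ ^ (1/β) * C₂⁻¹) ^ β) := by
          rw [hAinv]; field_simp
    _ ≤ C₁⁻¹ * C₂ ^ β * q ^ β := by
          refine mul_le_mul_of_nonneg_left
            (Real.rpow_le_rpow (by positivity) hge hβ0.le) (by positivity)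
  · push_neg at hcase1
    have hle1 : C₁⁻¹ * C₂ ^ β * q ^ β ≤ 1 := by
      have hq' : q ≤ C₁ ^ (1/β) * C₂⁻¹ := by
        rw [mul_comm, ← div_eq_inv_mul, le_div_iff₀ hC₂0]
        exact hcase1.le
      have h6 : q ^ β ≤ (C₁ ^ (1/β) * C₂⁻¹) ^ β := Real.rpow_le_rpow hq.le hq' hβ0.le
      rw [hAinv] at h6
      calc C₁⁻¹ * C₂ ^ β * q ^ β ≤ C₁⁻¹ * C₂ ^ β * (C₁ * (C₂ ^ β)⁻¹) :=
            mul_le_mul_of_nonneg_left h6 (by positivity)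
      _ = 1 := by field_simp
    have hFF : F q * F (q * C₂) = C₁ ^ (-(2:ℝ)) * C₂ ^ (2*β) * q ^ (2*β) := by
      by_cases hq2 : C₁ ^ (1/β) ≤ q
      · -- q above A, q C₂ in interval 0
        have a1 : C₁ ^ (1/β) * C₂ ^ (2*((0:ℕ):ℝ)+1) ≤ q * C₂ := by
          rw [show (2*((0:ℕ):ℝ)+1) = 1 by norm_num, Real.rpow_one]
          exact mul_le_mul_of_nonneg_right hq2 hC₂0.le
        have a2 : q * C₂ ≤ C₁ ^ (1/β) * C₂ ^ (2*((0:ℕ):ℝ)) := by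
          rw [show (2*((0:ℕ):ℝ)) = 0 by norm_num, Real.rpow_zero, mul_one]
          exact hcase1.le
        rw [hF3 q hq2, one_mul, hF2 0 (q*C₂) a1 a2, Real.mul_rpow hq.le hC₂0.le,
          show -(2*((0:ℕ):ℝ)*β) = 0 by norm_num, Real.rpow_zero]
        ring
      · push_neg at hq2
        obtain ⟨m, h1, h2⟩ := aux_mem C₁ C₂ β hC₁ hC₂0 hC₂1 q hq hq2.le
        have hstep : ∀ x : ℝ, (C₁ ^ (1/β) * C₂ ^ x) * C₂ = C₁ ^ (1/β) * C₂ ^ (x+1) := by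
          intro x
          rw [mul_assoc, ← Real.rpow_add_one hC₂0.ne' x]
        have b1 : C₁ ^ (1/β) * C₂ ^ (((m+1:ℕ):ℝ)+1) ≤ q * C₂ := by
          have := mul_le_mul_of_nonneg_right h1 hC₂0.le
          rw [hstep] at this
          convert this using 3
          rfl
          push_cast
          ring
        have b2 : q * C₂ ≤ C₁ ^ (1/β) * C₂ ^ ((m+1:ℕ):ℝ) := by
          have := mul_le_mul_of_nonneg_right h2 hC₂0.le
          rw [hstep] at this
          convert this using 3
          rfl
          push_cast
          ring
        rcases Nat.even_or_odd m with he | ho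
        · rw [aux_even C₁ C₂ β F hF2 m he q h1 h2,
            aux_odd C₁ C₂ β F hF1 (m+1) (Even.add_one he) (q*C₂) b1 b2]
          push_cast
          rw [show C₁ ^ (-(2:ℝ)) * C₂ ^ (-((m:ℝ)*β)) * q ^ (2*β) * C₂ ^ (((m:ℝ)+1+1)*β)
            = C₁ ^ (-(2:ℝ)) * (C₂ ^ (-((m:ℝ)*β)) * C₂ ^ (((m:ℝ)+1+1)*β)) * q ^ (2*β) by ring,
            ← Real.rpow_add hC₂0, show -((m:ℝ)*β) + ((m:ℝ)+1+1)*β = 2*β by ring]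
        · rw [aux_odd C₁ C₂ β F hF1 m ho q h1 h2,
            aux_even C₁ C₂ β F hF2 (m+1) (Odd.add_one ho) (q*C₂) b1 b2,
            Real.mul_rpow hq.le hC₂0.le]
          push_cast
          rw [show C₂ ^ (((m:ℝ)+1)*β) * (C₁ ^ (-(2:ℝ)) * C₂ ^ (-(((m:ℝ)+1)*β)) * (q ^ (2*β) * C₂ ^ (2*β)))
            = C₁ ^ (-(2:ℝ)) * (C₂ ^ (((m:ℝ)+1)*β) * C₂ ^ (-(((m:ℝ)+1)*β))) * (q ^ (2*β) * C₂ ^ (2*β)) by ring,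
            ← Real.rpow_add hC₂0, add_neg_cancel, Real.rpow_zero]
          ring
    rw [hFF, hsq, Real.sqrt_sq hc0.le, min_eq_right hle1]
end
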